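/- For n ≥ 2 and 1 ≤ k ≤ n, the difference between the Bernoulli variance and the constant-per-layer variance equals (n² + 7n − 8)(1 − C_{n,k}) / (n(n+2)) ≥ 0 where the Bernoulli formula is evaluated with leading term 18k/n (i.e., both formulas share the term 18k/n); hence constant-per-layer sparsity has output-norm variance no larger than Bernoulli sparsity. -/
import Mathlib


/-- The difference between the Bernoulli variance (evaluated at `C_{n,k} = 1`) and the
constant-per-layer variance equals `(n² + 7n − 8)(1 − C_{n,k})/(n(n+2)) ≥ 0`; hence
constant-per-layer sparsity has output-norm variance no larger than Bernoulli sparsity. -/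
theorem stmt_19 (n k : ℝ) (hn : 2 ≤ n) (hk1 : 1 ≤ k) (hkn : k ≤ n) :
    (5*n - 8 + 18*k/n)/(n*(n+2))
        - ((n^2 + 7*n - 8)*((n - 1/k)/(n - 1/n)) + 18*k/n - n^2 - 2*n)/(n*(n+2))
      = (n^2 + 7*n - 8)*(1 - (n - 1/k)/(n - 1/n))/(n*(n+2)) ∧
    0 ≤ (n^2 + 7*n - 8)*(1 - (n - 1/k)/(n - 1/n))/(n*(n+2)) ∧
    ((n^2 + 7*n - 8)*((n - 1/k)/(n - 1/n)) + 18*k/n - n^2 - 2*n)/(n*(n+2))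
      ≤ (5*n - 8 + 18*k/n)/(n*(n+2)) := by
  have hn0 : (0:ℝ) < n := by linarith
  have hk0 : (0:ℝ) < k := by linarith
  have heq : (5*n - 8 + 18*k/n)/(n*(n+2))
        - ((n^2 + 7*n - 8)*((n - 1/k)/(n - 1/n)) + 18*k/n - n^2 - 2*n)/(n*(n+2))
      = (n^2 + 7*n - 8)*(1 - (n - 1/k)/(n - 1/n))/(n*(n+2)) := by
    ring
  have hC : (n - 1/k)/(n - 1/n) ≤ 1 := by
    have hden : 0 < n - 1/n := by
      have : 1/n ≤ 1 := by
        rw [div_le_one hn0]; linarith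
      linarith
    rw [div_le_one hden]
    have : 1/n ≤ 1/k := one_div_le_one_div_of_le hk0 hkn
    linarith
  have hnum : 0 ≤ (n^2 + 7*n - 8)*(1 - (n - 1/k)/(n - 1/n)) := by
    apply mul_nonneg
    · nlinarith
    · linarith
  have hpos : 0 < n*(n+2) := by positivity
  have h0 : 0 ≤ (n^2 + 7*n - 8)*(1 - (n - 1/k)/(n - 1/n))/(n*(n+2)) :=
    div_nonneg hnum hpos.le
  exact ⟨heq, h0, by linarith [heq ▸ h0]⟩
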